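/- arXiv:2106.12063 — 5 statements merged into one kernel-verified Lean document; each statement's English description precedes it below -/
import Mathlib

section
/- If two simplices (q_0,...,q_k) and (p_0,...,p_k) in ℝ^k with affinely independent vertices have all pairwise distance ratios equal (r_{ijl}(q) = r_{ijl}(p) for all distinct i,j,l), then the Gram matrices of their unit edge-direction matrices coincide: Π(q)ᵀΠ(q) = Π(p)ᵀΠ(p). -/
/-! The off-diagonal Gram entries are the cosines of the angles at `q 0` of the triangles
`q 0, q i, q j`. By the law of cosines, with sides `a = ‖q i - q 0‖`, `b = ‖q j - q 0‖`,
`c = ‖q i - q j‖`, such a cosine equals `(a/b + b/a - (c/a)(c/b)) / 2`, a function of the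
ratios `r_{ijl}` alone. The diagonal entries are `1`. -/

open Matrix

open scoped InnerProductSpace

lemma transpose_mul_self_of_columns_eq_gram {ι m : Type*} [Fintype m]
    (v : ι → EuclideanSpace ℝ m) :
    (Matrix.of fun a j => v j a)ᵀ * Matrix.of (fun a j => v j a) = gram ℝ v := by
  ext i j
  simp only [mul_apply, transpose_apply, of_apply, gram_apply, PiLp.inner_apply,
    RCLike.inner_apply, conj_trivial, mul_comm]

lemma real_inner_normalize_sub_eq_ratios {E : Type*} [NormedAddCommGroup E]
    [InnerProductSpace ℝ E] {x y z : E} (hx : x ≠ z) (hy : y ≠ z) :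
    ⟪‖x - z‖⁻¹ • (x - z), ‖y - z‖⁻¹ • (y - z)⟫_ℝ =
      (‖z - x‖ / ‖z - y‖ + ‖z - y‖ / ‖z - x‖ - ‖x - y‖ / ‖x - z‖ * (‖y - x‖ / ‖y - z‖)) / 2 := by
  have hxz : ‖x - z‖ ≠ 0 := norm_ne_zero_iff.mpr (sub_ne_zero.mpr hx)
  have hyz : ‖y - z‖ ≠ 0 := norm_ne_zero_iff.mpr (sub_ne_zero.mpr hy)
  have hcos : ‖x - y‖ ^ 2 = ‖x - z‖ ^ 2 - 2 * ⟪x - z, y - z⟫_ℝ + ‖y - z‖ ^ 2 := by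
    rw [← norm_sub_sq_real, sub_sub_sub_cancel_right]
  rw [real_inner_smul_left, real_inner_smul_right, norm_sub_rev z x, norm_sub_rev z y,
    norm_sub_rev y x]
  field_simp
  linarith

lemma real_inner_normalize_self {E : Type*} [NormedAddCommGroup E] [InnerProductSpace ℝ E]
    {x : E} (hx : x ≠ 0) : ⟪‖x‖⁻¹ • x, ‖x‖⁻¹ • x⟫_ℝ = 1 := by
  rw [real_inner_self_eq_norm_sq, norm_smul, norm_inv, norm_norm,
    inv_mul_cancel₀ (norm_ne_zero_iff.mpr hx), one_pow]

theorem gram_matrices_eq_of_equal_ratios {k : ℕ}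
    (p q : Fin (k + 1) → EuclideanSpace ℝ (Fin k))
    (hp : AffineIndependent ℝ p) (hq : AffineIndependent ℝ q)
    (hratio : ∀ i j l : Fin (k + 1), i ≠ j → j ≠ l → i ≠ l →
      ‖q i - q j‖ / ‖q i - q l‖ = ‖p i - p j‖ / ‖p i - p l‖)
    (Pq Pp : Matrix (Fin k) (Fin k) ℝ)
    (hPq : Pq = Matrix.of fun a j : Fin k => ((‖q j.succ - q 0‖)⁻¹ • (q j.succ - q 0)) a)
    (hPp : Pp = Matrix.of fun a j : Fin k => ((‖p j.succ - p 0‖)⁻¹ • (p j.succ - p 0)) a) :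
    Pqᵀ * Pq = Ppᵀ * Pp := by
  subst hPq hPp
  rw [transpose_mul_self_of_columns_eq_gram, transpose_mul_self_of_columns_eq_gram]
  ext i j
  simp only [gram_apply]
  have hne : ∀ j : Fin k, j.succ ≠ 0 := Fin.succ_ne_zero
  rcases eq_or_ne i j with rfl | hij
  · rw [real_inner_normalize_self (sub_ne_zero.mpr (hq.injective.ne (hne i))),
      real_inner_normalize_self (sub_ne_zero.mpr (hp.injective.ne (hne i)))]
  · have hij' : i.succ ≠ j.succ := (Fin.succ_injective _).ne hij
    rw [real_inner_normalize_sub_eq_ratios (hq.injective.ne (hne i)) (hq.injective.ne (hne j)),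
      real_inner_normalize_sub_eq_ratios (hp.injective.ne (hne i)) (hp.injective.ne (hne j)),
      hratio 0 i.succ j.succ (hne i).symm hij' (hne j).symm,
      hratio 0 j.succ i.succ (hne j).symm hij'.symm (hne i).symm,
      hratio i.succ j.succ 0 hij' (hne j) (hne i),
      hratio j.succ i.succ 0 hij'.symm (hne i) (hne j)]
end

section
/- If two tuples of affinely independent points (q_0,...,q_k) and (p_0,...,p_k) in ℝ^k have all pairwise distance ratios equal, then there exists an orthogonal matrix U such that (q_j − q_0)/‖q_j − q_0‖ = U · (p_j − p_0)/‖p_j − p_0‖ for all j = 1,...,k. -/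
/-!
Equal distance ratios make each triangle `p₀ pᵢ pⱼ` similar to `q₀ qᵢ qⱼ`, so by polarization the
unit edge vectors at `p₀` and at `q₀` have the same Gram matrix. The unit edge vectors at `p₀` form
a basis, hence the linear map sending them to their counterparts at `q₀` preserves inner products,
and its matrix in the standard basis is orthogonal.
-/

open Matrix
open scoped InnerProductSpace RealInnerProductSpace

section Similar

variable {E : Type*} [NormedAddCommGroup E] [InnerProductSpace ℝ E]

theorem inner_inv_norm_smul_eq_of_norm_eq_mul {a b a' b' : E} {t : ℝ} (ht : t ≠ 0)
    (ha : ‖a'‖ = t * ‖a‖) (hb : ‖b'‖ = t * ‖b‖) (hab : ‖a' - b'‖ = t * ‖a - b‖) :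
    ⟪‖a'‖⁻¹ • a', ‖b'‖⁻¹ • b'⟫_ℝ = ⟪‖a‖⁻¹ • a, ‖b‖⁻¹ • b⟫_ℝ := by
  have hinner : ⟪a', b'⟫_ℝ = t ^ 2 * ⟪a, b⟫_ℝ := by
    rw [real_inner_eq_norm_mul_self_add_norm_mul_self_sub_norm_sub_mul_self_div_two,
      real_inner_eq_norm_mul_self_add_norm_mul_self_sub_norm_sub_mul_self_div_two a, ha, hb, hab]
    ring
  rw [real_inner_smul_left, real_inner_smul_right, real_inner_smul_left, real_inner_smul_right,
    hinner, ha, hb, mul_inv, mul_inv]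
  field_simp

theorem inner_inv_norm_smul_sub_eq_of_div_eq {x₀ x₁ x₂ y₀ y₁ y₂ : E} (hx : x₁ ≠ x₂)
    (hy : y₁ ≠ y₂) (h₁ : ‖y₁ - y₀‖ / ‖y₁ - y₂‖ = ‖x₁ - x₀‖ / ‖x₁ - x₂‖)
    (h₂ : ‖y₂ - y₀‖ / ‖y₂ - y₁‖ = ‖x₂ - x₀‖ / ‖x₂ - x₁‖) :
    ⟪‖y₁ - y₀‖⁻¹ • (y₁ - y₀), ‖y₂ - y₀‖⁻¹ • (y₂ - y₀)⟫_ℝ =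
      ⟪‖x₁ - x₀‖⁻¹ • (x₁ - x₀), ‖x₂ - x₀‖⁻¹ • (x₂ - x₀)⟫_ℝ := by
  have hx' : ‖x₁ - x₂‖ ≠ 0 := norm_ne_zero_iff.2 (sub_ne_zero.2 hx)
  have hy' : ‖y₁ - y₂‖ ≠ 0 := norm_ne_zero_iff.2 (sub_ne_zero.2 hy)
  rw [norm_sub_rev y₂ y₁, norm_sub_rev x₂ x₁] at h₂
  rw [div_eq_div_iff hy' hx'] at h₁ h₂
  refine inner_inv_norm_smul_eq_of_norm_eq_mul (t := ‖y₁ - y₂‖ / ‖x₁ - x₂‖)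
    (div_ne_zero hy' hx') ?_ ?_ ?_
  · field_simp; linarith
  · field_simp; linarith
  · rw [sub_sub_sub_cancel_right, sub_sub_sub_cancel_right]; field_simp

theorem inner_inv_norm_smul_sub_eq_of_forall_div_eq {ι : Type*} {p q : ι → E}
    (hp : Function.Injective p) (hq : Function.Injective q)
    (hratio : ∀ i j l : ι, i ≠ j → j ≠ l → i ≠ l →
      ‖q i - q j‖ / ‖q i - q l‖ = ‖p i - p j‖ / ‖p i - p l‖)
    {o i j : ι} (hi : i ≠ o) (hj : j ≠ o) :
    ⟪‖q i - q o‖⁻¹ • (q i - q o), ‖q j - q o‖⁻¹ • (q j - q o)⟫_ℝ =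
      ⟪‖p i - p o‖⁻¹ • (p i - p o), ‖p j - p o‖⁻¹ • (p j - p o)⟫_ℝ := by
  rcases eq_or_ne i j with rfl | hij
  · have hp' : p i - p o ≠ 0 := sub_ne_zero.2 (hp.ne hi)
    have hq' : q i - q o ≠ 0 := sub_ne_zero.2 (hq.ne hi)
    simp [norm_smul, hp', hq']
  · exact inner_inv_norm_smul_sub_eq_of_div_eq (hp.ne hij) (hq.ne hij)
      (hratio i o j hi hj.symm hij) (hratio j o i hj hi.symm hij.symm)

end Similar

theorem AffineIndependent.linearIndependent_sub_zero {𝕜 E : Type*} [Ring 𝕜] [AddCommGroup E]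
    [Module 𝕜 E] {k : ℕ} {p : Fin (k + 1) → E} (hp : AffineIndependent 𝕜 p) :
    LinearIndependent 𝕜 fun j : Fin k => p j.succ - p 0 :=
  ((affineIndependent_iff_linearIndependent_vsub 𝕜 p 0).1 hp).comp
    (fun j => ⟨j.succ, j.succ_ne_zero⟩) fun _ _ h => Fin.succ_injective _ (congrArg Subtype.val h)

theorem Module.Basis.exists_linearIsometry_apply_eq {𝕜 ι E F : Type*} [RCLike 𝕜]
    [NormedAddCommGroup E] [InnerProductSpace 𝕜 E] [NormedAddCommGroup F] [InnerProductSpace 𝕜 F]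
    (b : Module.Basis ι 𝕜 E) (w : ι → F) (hw : ∀ i j, ⟪w i, w j⟫_𝕜 = ⟪b i, b j⟫_𝕜) :
    ∃ f : E →ₗᵢ[𝕜] F, ∀ i, f (b i) = w i := by
  let f := b.constr 𝕜 w
  have hf : ((innerₛₗ 𝕜).comp f).compl₂ f = innerₛₗ 𝕜 :=
    LinearMap.ext_basis b b fun i j => by simpa [f] using hw i j
  exact ⟨f.isometryOfInner fun x y => congrArg (fun B => B x y) hf, fun i => b.constr_basis 𝕜 w i⟩

theorem LinearIsometry.exists_mem_unitaryGroup_apply_eq_mulVec {𝕜 n : Type*} [RCLike 𝕜]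
    [Fintype n] [DecidableEq n] (f : EuclideanSpace 𝕜 n →ₗᵢ[𝕜] EuclideanSpace 𝕜 n) :
    ∃ U ∈ unitaryGroup n 𝕜, ∀ x, f x = WithLp.toLp 2 (U *ᵥ x.ofLp) := by
  obtain ⟨U, hU⟩ :
      ∃ U : Matrix n n 𝕜, toEuclideanCLM (n := n) (𝕜 := 𝕜) U = f.toContinuousLinearMap :=
    toEuclideanCLM.surjective _
  refine ⟨U, mem_unitaryGroup_iff'.2
    (EquivLike.injective (toEuclideanCLM (n := n) (𝕜 := 𝕜)) ?_), fun x => ?_⟩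
  · rw [map_mul, map_star, map_one, hU, ContinuousLinearMap.star_eq_adjoint]
    exact f.adjoint_comp_self
  · rw [← toEuclideanCLM_toLp, hU]; rfl

theorem exists_orthogonal_of_equal_ratios {k : ℕ}
    (p q : Fin (k + 1) → EuclideanSpace ℝ (Fin k))
    (hp : AffineIndependent ℝ p) (hq : AffineIndependent ℝ q)
    (hratio : ∀ i j l : Fin (k + 1), i ≠ j → j ≠ l → i ≠ l →
      ‖q i - q j‖ / ‖q i - q l‖ = ‖p i - p j‖ / ‖p i - p l‖) :
    ∃ U : Matrix (Fin k) (Fin k) ℝ, Uᵀ * U = 1 ∧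
      ∀ j : Fin k,
        (‖q j.succ - q 0‖)⁻¹ • (q j.succ - q 0) =
          (WithLp.toLp 2 (U.mulVec ((‖p j.succ - p 0‖)⁻¹ • (p j.succ - p 0))) : EuclideanSpace ℝ (Fin k)) := by
  have hv : ∀ j : Fin k, ‖p j.succ - p 0‖⁻¹ ≠ 0 := fun j =>
    inv_ne_zero (norm_ne_zero_iff.2 (sub_ne_zero.2 (hp.injective.ne j.succ_ne_zero)))
  let b := (basisOfLinearIndependentOfCardEqFinrank' _ hp.linearIndependent_sub_zero
    (by simp)).isUnitSMul fun j => (hv j).isUnit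
  have hb : ∀ j, b j = ‖p j.succ - p 0‖⁻¹ • (p j.succ - p 0) := fun j => by
    simp only [b, Module.Basis.isUnitSMul_apply, coe_basisOfLinearIndependentOfCardEqFinrank']
  obtain ⟨f, hf⟩ := b.exists_linearIsometry_apply_eq
    (fun j => ‖q j.succ - q 0‖⁻¹ • (q j.succ - q 0)) fun i j => by
      rw [hb, hb]
      exact inner_inv_norm_smul_sub_eq_of_forall_div_eq hp.injective hq.injective hratio
        i.succ_ne_zero j.succ_ne_zero
  obtain ⟨U, hU, hfU⟩ := f.exists_mem_unitaryGroup_apply_eq_mulVec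
  refine ⟨U, ?_, fun j => ?_⟩
  · simpa [star_eq_conjTranspose, conjTranspose_eq_transpose_of_trivial] using
      mem_unitaryGroup_iff'.1 hU
  · rw [← hf j, hfU, hb]
    rfl
end

section
/- Given that (q_j − q_0)/‖q_j − q_0‖ = U (p_j − p_0)/‖p_j − p_0‖ for all j = 1,...,k with U orthogonal, the same relation holds for all pairs: (q_j − q_i)/‖q_j − q_i‖ = U (p_j − p_i)/‖p_j − p_i‖ for all distinct i,j in {0,...,k}. -/
open Matrix

/-!
Put `c = ‖q j - q i‖ / ‖p j - p i‖`. The ratio hypothesis at the vertex `j` of the triangle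
`i, j, 0` says that `q j - q 0` and `p j - p 0` have the same length ratio `c`, and likewise at `i`.
Undoing the normalisation in the hypothesis thus gives `q m - q 0 = c • U (p m - p 0)` for
`m = i, j`; subtracting yields `q j - q i = c • U (p j - p i)`, which is the claim after
normalising again.
-/

section

variable {ι E F : Type*} [NormedAddCommGroup E] [NormedAddCommGroup F] {p : ι → E} {q : ι → F}

theorem div_norm_sub_eq_div_norm_sub (hp : Function.Injective p) (hq : Function.Injective q)
    (hratio : ∀ i j l : ι, i ≠ j → j ≠ l → i ≠ l →
      ‖q i - q j‖ / ‖q i - q l‖ = ‖p i - p j‖ / ‖p i - p l‖)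
    {i j l : ι} (hij : i ≠ j) (hjl : j ≠ l) (hil : i ≠ l) :
    ‖q i - q l‖ / ‖p i - p l‖ = ‖q i - q j‖ / ‖p i - p j‖ := by
  have hnorm_q : ‖q i - q l‖ ≠ 0 := norm_ne_zero_iff.2 (sub_ne_zero.2 (hq.ne hil))
  have hnorm_pj : ‖p i - p j‖ ≠ 0 := norm_ne_zero_iff.2 (sub_ne_zero.2 (hp.ne hij))
  have hnorm_pl : ‖p i - p l‖ ≠ 0 := norm_ne_zero_iff.2 (sub_ne_zero.2 (hp.ne hil))
  have h := hratio i j l hij hjl hil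
  rw [div_eq_div_iff hnorm_q hnorm_pl] at h
  rw [div_eq_div_iff hnorm_pl hnorm_pj]
  linarith

variable [NormedSpace ℝ E] [NormedSpace ℝ F]

theorem inv_norm_smul_eq_map_inv_norm_smul_iff (L : E →ₗ[ℝ] F) {x : F} (hx : x ≠ 0) (y : E) :
    ‖x‖⁻¹ • x = L (‖y‖⁻¹ • y) ↔ x = (‖x‖ / ‖y‖) • L y := by
  have hx' : ‖x‖ ≠ 0 := norm_ne_zero_iff.2 hx
  rw [map_smul, div_eq_mul_inv, mul_smul, inv_smul_eq_iff₀ hx']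

theorem inv_norm_smul_sub_eq_map_of_base (hp : Function.Injective p) (hq : Function.Injective q)
    (hratio : ∀ i j l : ι, i ≠ j → j ≠ l → i ≠ l →
      ‖q i - q j‖ / ‖q i - q l‖ = ‖p i - p j‖ / ‖p i - p l‖)
    (L : E →ₗ[ℝ] F) (b : ι)
    (hbase : ∀ j, j ≠ b → ‖q j - q b‖⁻¹ • (q j - q b) = L (‖p j - p b‖⁻¹ • (p j - p b)))
    {i j : ι} (hij : i ≠ j) :
    ‖q j - q i‖⁻¹ • (q j - q i) = L (‖p j - p i‖⁻¹ • (p j - p i)) := by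
  set c := ‖q j - q i‖ / ‖p j - p i‖
  have hsub_base : ∀ m n, m ≠ n → ‖q m - q n‖ / ‖p m - p n‖ = c →
      q m - q b = c • L (p m - p b) := by
    intro m n hmn hc
    by_cases hm : m = b
    · simp [hm]
    rw [← hc, (inv_norm_smul_eq_map_inv_norm_smul_iff L (sub_ne_zero.2 (hq.ne hm)) _).1
      (hbase m hm)]
    rcases eq_or_ne n b with rfl | hn
    · rfl
    · rw [div_norm_sub_eq_div_norm_sub hp hq hratio hmn hn hm]
  have hj := hsub_base j i hij.symm rfl
  have hi := hsub_base i j hij (by rw [norm_sub_rev (q i), norm_sub_rev (p i)])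
  have hdiff : q j - q i = c • L (p j - p i) := by
    rw [← sub_sub_sub_cancel_right (q j) (q i) (q b), hj, hi, ← smul_sub, ← map_sub,
      sub_sub_sub_cancel_right]
  exact (inv_norm_smul_eq_map_inv_norm_smul_iff L (sub_ne_zero.2 (hq.ne hij.symm)) _).2 hdiff

end

theorem unit_directions_all_pairs_general {k : ℕ}
    (p q : Fin (k + 1) → EuclideanSpace ℝ (Fin k))
    (hpne : ∀ i j : Fin (k + 1), i ≠ j → p i ≠ p j)
    (hqne : ∀ i j : Fin (k + 1), i ≠ j → q i ≠ q j)
    (hratio : ∀ i j l : Fin (k + 1), i ≠ j → j ≠ l → i ≠ l →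
      ‖q i - q j‖ / ‖q i - q l‖ = ‖p i - p j‖ / ‖p i - p l‖)
    (U : Matrix (Fin k) (Fin k) ℝ)
    (hbase : ∀ j : Fin k,
      (‖q j.succ - q 0‖)⁻¹ • (q j.succ - q 0) =
        (WithLp.toLp 2 (U.mulVec ((‖p j.succ - p 0‖)⁻¹ • (p j.succ - p 0))) : EuclideanSpace ℝ (Fin k))) :
    ∀ i j : Fin (k + 1), i ≠ j →
      (‖q j - q i‖)⁻¹ • (q j - q i) =
        (WithLp.toLp 2 (U.mulVec ((‖p j - p i‖)⁻¹ • (p j - p i))) : EuclideanSpace ℝ (Fin k)) := by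
  intro i j hij
  refine inv_norm_smul_sub_eq_map_of_base (Function.injective_iff_pairwise_ne.2 hpne)
    (Function.injective_iff_pairwise_ne.2 hqne) hratio (Matrix.toLpLin 2 2 U) 0 ?_ hij
  intro m hm
  obtain ⟨m, rfl⟩ := Fin.exists_succ_eq.2 hm
  exact hbase m

theorem unit_directions_all_pairs {k : ℕ}
    (p q : Fin (k + 1) → EuclideanSpace ℝ (Fin k))
    (hpne : ∀ i j : Fin (k + 1), i ≠ j → p i ≠ p j)
    (hqne : ∀ i j : Fin (k + 1), i ≠ j → q i ≠ q j)
    (hratio : ∀ i j l : Fin (k + 1), i ≠ j → j ≠ l → i ≠ l →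
      ‖q i - q j‖ / ‖q i - q l‖ = ‖p i - p j‖ / ‖p i - p l‖)
    (U : Matrix (Fin k) (Fin k) ℝ) (hU : Uᵀ * U = 1)
    (hbase : ∀ j : Fin k,
      (‖q j.succ - q 0‖)⁻¹ • (q j.succ - q 0) =
        (WithLp.toLp 2 (U.mulVec ((‖p j.succ - p 0‖)⁻¹ • (p j.succ - p 0))) : EuclideanSpace ℝ (Fin k))) :
    ∀ i j : Fin (k + 1), i ≠ j →
      (‖q j - q i‖)⁻¹ • (q j - q i) =
        (WithLp.toLp 2 (U.mulVec ((‖p j - p i‖)⁻¹ • (p j - p i))) : EuclideanSpace ℝ (Fin k)) :=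
  unit_directions_all_pairs_general p q hpne hqne hratio U hbase
end

section
/- Two tuples of k+1 affinely independent points in ℝ^k are similar (related by a composition of a translation, an orthogonal transformation, and a positive scaling) if and only if all their pairwise distance ratios r_{ijl} = ‖x_i − x_j‖/‖x_i − x_l‖ agree for all distinct i,j,l. -/
/-!
Equal ratios force all pairwise distances to scale by one factor `r`: the ratio identity at a
triangle `(i, j, l)` transfers the factor from the side `il` to the side `ij`, so the factor of
one fixed side spreads first to all sides through its endpoint `i₀` and then to all others.
After dividing `q` by `r` the two tuples are congruent. By polarization, congruent tuples have
the same inner products `⟪p i - p i₀, p j - p i₀⟫`, so the linear map sending the basis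
`p i - p i₀` to `q i - q i₀` preserves inner products; its matrix is orthogonal.
-/

open Matrix
open scoped RealInnerProductSpace

namespace Matrix

variable {n R : Type*} [Fintype n] [DecidableEq n] [CommRing R]

theorem transpose_mul_self_eq_one_iff_dotProduct_mulVec {U : Matrix n n R} :
    Uᵀ * U = 1 ↔ ∀ x y : n → R, (U *ᵥ x) ⬝ᵥ (U *ᵥ y) = x ⬝ᵥ y := by
  have key : ∀ x y : n → R, (U *ᵥ x) ⬝ᵥ (U *ᵥ y) = (x ᵥ* (Uᵀ * U)) ⬝ᵥ y := fun x y => by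
    rw [dotProduct_mulVec, ← vecMul_vecMul, vecMul_transpose]
  simp only [key]
  refine ⟨fun h x y => by rw [h, vecMul_one], fun h => ext_of_single_vecMul fun i => ?_⟩
  rw [vecMul_one]
  exact dotProduct_eq _ _ (h _)

theorem transpose_mul_self_eq_one_iff_inner_toEuclideanLin {U : Matrix n n ℝ} :
    Uᵀ * U = 1 ↔ ∀ x y : EuclideanSpace ℝ n,
      ⟪toEuclideanLin U x, toEuclideanLin U y⟫ = ⟪x, y⟫ := by
  simp only [transpose_mul_self_eq_one_iff_dotProduct_mulVec, toLpLin_apply,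
    EuclideanSpace.inner_eq_star_dotProduct, star_trivial]
  exact ⟨fun h x y => h _ _, fun h x y => h (WithLp.toLp 2 y) (WithLp.toLp 2 x)⟩

end Matrix

section Similar

variable {ι P₁ P₂ : Type*} {v₁ : ι → P₁} {v₂ : ι → P₂}

theorem Similar.dist_div_dist_eq [PseudoMetricSpace P₁] [PseudoMetricSpace P₂]
    (h : Similar v₁ v₂) (i j l : ι) :
    dist (v₁ i) (v₁ j) / dist (v₁ i) (v₁ l) = dist (v₂ i) (v₂ j) / dist (v₂ i) (v₂ l) := by
  obtain ⟨r, hr, hd⟩ := similar_iff_exists_pos_dist_eq.mp h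
  rw [hd, hd, mul_div_mul_left _ _ hr.ne']

variable [MetricSpace P₁] [MetricSpace P₂]

theorem similar_of_dist_div_dist_eq (h₁ : Function.Injective v₁) (h₂ : Function.Injective v₂)
    (h : ∀ i j l, i ≠ j → j ≠ l → i ≠ l →
      dist (v₁ i) (v₁ j) / dist (v₁ i) (v₁ l) = dist (v₂ i) (v₂ j) / dist (v₂ i) (v₂ l)) :
    Similar v₁ v₂ := by
  rcases subsingleton_or_nontrivial ι with hι | ⟨i₀, i₁, h01⟩
  · exact Similar.of_subsingleton_index
  have hpos : ∀ {i j}, i ≠ j → 0 < dist (v₂ i) (v₂ j) := fun hij => dist_pos.mpr (h₂.ne hij)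
  set r := dist (v₁ i₀) (v₁ i₁) / dist (v₂ i₀) (v₂ i₁) with hr_def
  have hr : 0 < r := div_pos (dist_pos.mpr (h₁.ne h01)) (hpos h01)
  have scale : ∀ {i j l}, i ≠ j → j ≠ l → i ≠ l →
      dist (v₁ i) (v₁ l) = r * dist (v₂ i) (v₂ l) →
      dist (v₁ i) (v₁ j) = r * dist (v₂ i) (v₂ j) := by
    intro i j l hij hjl hil hl
    have hratio := h i j l hij hjl hil
    rw [hl, div_eq_div_iff (mul_pos hr (hpos hil)).ne' (hpos hil).ne'] at hratio
    exact mul_right_cancel₀ (hpos hil).ne' (by linarith)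
  have scale_i₀ : ∀ j, dist (v₁ i₀) (v₁ j) = r * dist (v₂ i₀) (v₂ j) := by
    intro j
    rcases eq_or_ne j i₀ with rfl | hj₀
    · simp
    rcases eq_or_ne j i₁ with rfl | hj₁
    · rw [hr_def, div_mul_cancel₀ _ (hpos h01).ne']
    exact scale hj₀.symm hj₁ h01 (by rw [hr_def, div_mul_cancel₀ _ (hpos h01).ne'])
  refine similar_iff_exists_pos_dist_eq.mpr ⟨r, hr, fun i j => ?_⟩
  rcases eq_or_ne i j with rfl | hij
  · simp
  rcases eq_or_ne i i₀ with rfl | hi₀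
  · exact scale_i₀ j
  rcases eq_or_ne j i₀ with rfl | hj₀
  · rw [dist_comm, scale_i₀, dist_comm]
  exact scale hij hj₀ hi₀ (by rw [dist_comm, scale_i₀, dist_comm])

theorem similar_iff_dist_div_dist_eq (h₁ : Function.Injective v₁) (h₂ : Function.Injective v₂) :
    Similar v₁ v₂ ↔ ∀ i j l, i ≠ j → j ≠ l → i ≠ l →
      dist (v₁ i) (v₁ j) / dist (v₁ i) (v₁ l) = dist (v₂ i) (v₂ j) / dist (v₂ i) (v₂ l) :=
  ⟨fun h i j l _ _ _ => h.dist_div_dist_eq i j l, similar_of_dist_div_dist_eq h₁ h₂⟩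

end Similar

section Congruent

variable {ι V₁ V₂ P₁ P₂ : Type*}
  [NormedAddCommGroup V₁] [InnerProductSpace ℝ V₁] [MetricSpace P₁] [NormedAddTorsor V₁ P₁]
  [NormedAddCommGroup V₂] [InnerProductSpace ℝ V₂] [MetricSpace P₂] [NormedAddTorsor V₂ P₂]

theorem Module.Basis.exists_linearIsometry_of_inner_eq (e : Module.Basis ι ℝ V₁) {w : ι → V₂}
    (h : ∀ i j, ⟪w i, w j⟫ = ⟪e i, e j⟫) : ∃ L : V₁ →ₗᵢ[ℝ] V₂, ∀ i, L (e i) = w i := by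
  let T : V₁ →ₗ[ℝ] V₂ := e.constr ℝ w
  have hT : ∀ i, T (e i) = w i := e.constr_basis ℝ w
  have hform : (innerₗ V₂).compl₁₂ T T = innerₗ V₁ :=
    LinearMap.ext_basis e e fun i j => by simp [hT, h]
  exact ⟨T.isometryOfInner fun x y => LinearMap.congr_fun₂ hform x y, hT⟩

theorem Congruent.inner_vsub_vsub {v₁ : ι → P₁} {v₂ : ι → P₂} (h : Congruent v₁ v₂)
    (i j l : ι) : ⟪v₁ i -ᵥ v₁ l, v₁ j -ᵥ v₁ l⟫ = ⟪v₂ i -ᵥ v₂ l, v₂ j -ᵥ v₂ l⟫ := by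
  simp only [real_inner_eq_norm_mul_self_add_norm_mul_self_sub_norm_sub_mul_self_div_two,
    vsub_sub_vsub_cancel_right, ← dist_eq_norm_vsub, congruent_iff_dist_eq.mp h]

theorem AffineBasis.exists_affineIsometry_of_congruent (b : AffineBasis ι ℝ P₁) {q : ι → P₂}
    (h : Congruent b q) : ∃ f : P₁ →ᵃⁱ[ℝ] P₂, ∀ i, f (b i) = q i := by
  obtain ⟨i₀⟩ := b.nonempty
  obtain ⟨L, hL⟩ := (b.basisOf i₀).exists_linearIsometry_of_inner_eq
    (w := fun j => q j -ᵥ q i₀) fun j l => by simp [b.basisOf_apply, h.inner_vsub_vsub]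
  refine ⟨{ toAffineMap := AffineMap.mk' (fun x => L (x -ᵥ b i₀) +ᵥ q i₀) L.toLinearMap (b i₀)
              fun x => by simp
            norm_map := L.norm_map }, fun i => ?_⟩
  change L (b i -ᵥ b i₀) +ᵥ q i₀ = q i
  rcases eq_or_ne i i₀ with rfl | hi
  · simp
  · simpa [b.basisOf_apply] using congrArg (· +ᵥ q i₀) (hL ⟨i, hi⟩)

end Congruent

section SimilarInInnerProductSpace

variable {ι E F : Type*} [NormedAddCommGroup E] [InnerProductSpace ℝ E]
  [NormedAddCommGroup F] [InnerProductSpace ℝ F]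

theorem AffineBasis.exists_linearIsometry_of_similar (b : AffineBasis ι ℝ E) {q : ι → F}
    (h : Similar q b) :
    ∃ r : ℝ, 0 < r ∧ ∃ (L : E →ₗᵢ[ℝ] F) (v : F), ∀ i, q i = r • L (b i) + v := by
  obtain ⟨r, hr, hdist⟩ := similar_iff_exists_pos_dist_eq.mp h
  have hcongr : Congruent b (r⁻¹ • q) := congruent_iff_dist_eq.mpr fun i j => by
    simp [dist_smul₀, hdist, abs_of_pos hr, hr.ne']
  obtain ⟨f, hf⟩ := b.exists_affineIsometry_of_congruent hcongr
  have hlin : ∀ x, f.linearIsometry x = f x - f 0 := fun x => by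
    simpa using f.map_vsub x 0
  refine ⟨r, hr, f.linearIsometry, r • f 0, fun i => ?_⟩
  rw [hlin, ← smul_add, sub_add_cancel, hf, Pi.smul_apply, smul_inv_smul₀ hr.ne']

end SimilarInInnerProductSpace

theorem similar_iff_equal_ratios_general {k : ℕ}
    (p q : Fin (k + 1) → EuclideanSpace ℝ (Fin k))
    (hp : AffineIndependent ℝ p) (hq : AffineIndependent ℝ q) :
    (∃ (lam : ℝ) (U : Matrix (Fin k) (Fin k) ℝ) (v : EuclideanSpace ℝ (Fin k)),
        0 < lam ∧ Uᵀ * U = 1 ∧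
        ∀ i : Fin (k + 1), q i = lam • (show EuclideanSpace ℝ (Fin k) from WithLp.toLp 2 (U.mulVec (p i))) + v) ↔
      (∀ i j l : Fin (k + 1), i ≠ j → j ≠ l → i ≠ l →
        ‖q i - q j‖ / ‖q i - q l‖ = ‖p i - p j‖ / ‖p i - p l‖) := by
  have hspan : affineSpan ℝ (Set.range p) = ⊤ :=
    hp.affineSpan_eq_top_iff_card_eq_finrank_add_one.mpr (by simp)
  let b : AffineBasis (Fin (k + 1)) ℝ (EuclideanSpace ℝ (Fin k)) := ⟨p, hp, hspan⟩
  simp only [← dist_eq_norm, ← similar_iff_dist_div_dist_eq hq.injective hp.injective]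
  constructor
  · rintro ⟨lam, U, v, hlam, hU, hqU⟩
    let L := (toEuclideanLin U).isometryOfInner
      (transpose_mul_self_eq_one_iff_inner_toEuclideanLin.mp hU)
    refine similar_iff_exists_pos_dist_eq.mpr ⟨lam, hlam, fun i j => ?_⟩
    rw [hqU, hqU, dist_add_right, dist_smul₀, Real.norm_of_nonneg hlam.le]
    exact congrArg (lam * ·) (L.dist_map (p i) (p j))
  · intro hsim
    obtain ⟨r, hr, L, v, hL⟩ := b.exists_linearIsometry_of_similar hsim
    refine ⟨r, toEuclideanLin.symm L.toLinearMap, v, hr, ?_, fun i => ?_⟩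
    · rw [transpose_mul_self_eq_one_iff_inner_toEuclideanLin, LinearEquiv.apply_symm_apply]
      exact L.inner_map_map
    · rw [hL i]
      exact congrArg (r • · + v)
        (LinearMap.congr_fun (toEuclideanLin.apply_symm_apply L.toLinearMap) (p i)).symm

theorem similar_iff_equal_ratios {k : ℕ}
    (p q : Fin (k + 1) → EuclideanSpace ℝ (Fin k))
    (hpne : ∀ i j : Fin (k + 1), i ≠ j → p i ≠ p j)
    (hqne : ∀ i j : Fin (k + 1), i ≠ j → q i ≠ q j)
    (hp : AffineIndependent ℝ p) (hq : AffineIndependent ℝ q) :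
    (∃ (lam : ℝ) (U : Matrix (Fin k) (Fin k) ℝ) (v : EuclideanSpace ℝ (Fin k)),
        0 < lam ∧ Uᵀ * U = 1 ∧
        ∀ i : Fin (k + 1), q i = lam • (show EuclideanSpace ℝ (Fin k) from WithLp.toLp 2 (U.mulVec (p i))) + v) ↔
      (∀ i j l : Fin (k + 1), i ≠ j → j ≠ l → i ≠ l →
        ‖q i - q j‖ / ‖q i - q l‖ = ‖p i - p j‖ / ‖p i - p l‖) :=
  similar_iff_equal_ratios_general p q hp hq
end

section
/- For points p_0,...,p_k ∈ ℝ^k, the squared k-dimensional volume of the simplex they span satisfies Vol² = ((−1)^{k+1} / (2^k (k!)²)) · CM, where CM is the Cayley–Menger determinant built from the pairwise squared distances d_{ij}² = ‖p_i − p_j‖². -/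
/-!
Expanding `‖p i - p j‖² = ‖p i‖² + ‖p j‖² - 2⟪p i, p j⟫`, the Cayley–Menger matrix factors as
`L * Rᵀ`, where `L` has rows `e₀` and `(‖p i‖², 1, p i)` and `R` has rows `e₁` and
`(1, ‖p i‖², -2 p i)`. Expanding along the first rows, both determinants reduce to the
determinant of the rows `(1, p i)`, with an extra factor `-(-2)^k` from `R`; subtracting the first
of these rows from the others leaves the determinant of the edge vectors `p (j + 1) - p 0`.
-/

open Matrix

noncomputable def cayleyMengerMatrix {E : Type*} [NormedAddCommGroup E] {m : ℕ}
    (p : Fin (m + 1) → E) : Matrix (Fin (m + 2)) (Fin (m + 2)) ℝ :=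
  of fun a b =>
    Fin.cases (Fin.cases 0 (fun _ => 1) b) (fun i => Fin.cases 1 (fun j => ‖p i - p j‖ ^ 2) b) a

namespace CayleyMenger

variable {m n : ℕ}

def homogeneousCoords (p : Fin (m + 1) → EuclideanSpace ℝ (Fin n)) :
    Matrix (Fin (m + 1)) (Fin (n + 1)) ℝ :=
  of fun i => Fin.cons 1 (p i)

noncomputable def leftFactor (p : Fin (m + 1) → EuclideanSpace ℝ (Fin n)) :
    Matrix (Fin (m + 2)) (Fin (n + 2)) ℝ :=
  of <| Fin.cons (Fin.cons 1 0) fun i => Fin.cons (‖p i‖ ^ 2) (homogeneousCoords p i)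

noncomputable def rightFactor (p : Fin (m + 1) → EuclideanSpace ℝ (Fin n)) :
    Matrix (Fin (m + 2)) (Fin (n + 2)) ℝ :=
  of <| Fin.cons (Fin.cons 0 (Fin.cons 1 0)) fun i =>
    Fin.cons 1 (Fin.cons (‖p i‖ ^ 2) fun c => -2 * p i c)

theorem cayleyMengerMatrix_eq_mul_transpose (p : Fin (m + 1) → EuclideanSpace ℝ (Fin n)) :
    cayleyMengerMatrix p = leftFactor p * (rightFactor p)ᵀ := by
  ext a b
  induction a using Fin.cases with
  | zero =>
    induction b using Fin.cases <;>
      simp [cayleyMengerMatrix, leftFactor, rightFactor, mul_apply, Fin.sum_univ_succ]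
  | succ i =>
    induction b using Fin.cases with
    | zero =>
      simp [cayleyMengerMatrix, leftFactor, rightFactor, homogeneousCoords, mul_apply,
        Fin.sum_univ_succ]
    | succ j =>
      have hinner : ∑ c, p i c * (-2 * p j c) = -2 * inner ℝ (p i) (p j) := by
        simp [PiLp.inner_apply, Finset.mul_sum, mul_comm, mul_left_comm]
      simp only [cayleyMengerMatrix, leftFactor, rightFactor, homogeneousCoords, mul_apply,
        Fin.sum_univ_succ, of_apply, transpose_apply, Fin.cases_succ, Fin.cons_zero,
        Fin.cons_succ, hinner, norm_sub_sq_real]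
      ring

variable {k : ℕ} (p : Fin (k + 1) → EuclideanSpace ℝ (Fin k))

theorem det_leftFactor : (leftFactor p).det = (homogeneousCoords p).det := by
  rw [det_succ_row_zero, Fin.sum_univ_succ]
  simp [leftFactor]
  rfl

theorem det_rightFactor : (rightFactor p).det = -(-2) ^ k * (homogeneousCoords p).det := by
  have hminor : ((rightFactor p).submatrix Fin.succ (Fin.succAbove 1)) =
      of fun i c => (Fin.cons 1 fun _ => -2 : Fin (k + 1) → ℝ) c * homogeneousCoords p i c := by
    ext i c
    cases c using Fin.cases <;> simp [rightFactor, homogeneousCoords]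
  rw [det_succ_row_zero, Fin.sum_univ_succ, Fin.sum_univ_succ, Fin.succ_zero_eq_one, hminor,
    det_mul_row, Fin.prod_cons]
  simp [rightFactor]

theorem det_homogeneousCoords :
    (homogeneousCoords p).det = (of fun a j : Fin k => (p j.succ - p 0) a).det := by
  have hreduce : (homogeneousCoords p).det =
      (of <| Fin.cons (homogeneousCoords p 0) fun i => Fin.cons 0 ⇑(p i.succ - p 0)).det := by
    refine det_eq_of_forall_row_eq_smul_add_const (Fin.cons 0 fun _ => 1) 0 rfl fun i c => ?_
    cases i using Fin.cases <;> cases c using Fin.cases <;> simp [homogeneousCoords]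
  rw [hreduce, det_succ_column_zero, Fin.sum_univ_succ]
  simp [homogeneousCoords]
  rw [← det_transpose]
  rfl

end CayleyMenger

open CayleyMenger in
theorem det_cayleyMengerMatrix {k : ℕ} (p : Fin (k + 1) → EuclideanSpace ℝ (Fin k)) :
    (cayleyMengerMatrix p).det =
      (-1) ^ (k + 1) * 2 ^ k * (of fun a j : Fin k => (p j.succ - p 0) a).det ^ 2 := by
  rw [cayleyMengerMatrix_eq_mul_transpose, det_mul, det_transpose, det_leftFactor,
    det_rightFactor, det_homogeneousCoords, neg_pow]
  ring

theorem volume_squared_cayley_menger {k : ℕ}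
    (p : Fin (k + 1) → EuclideanSpace ℝ (Fin k))
    (D : Matrix (Fin k) (Fin k) ℝ)
    (hD : D = Matrix.of fun a j : Fin k => (p j.succ - p 0) a)
    (CM : Matrix (Fin (k + 2)) (Fin (k + 2)) ℝ)
    (hCM : CM = Matrix.of fun a b : Fin (k + 2) =>
      Fin.cases (Fin.cases (0 : ℝ) (fun _ => 1) b)
        (fun i => Fin.cases (1 : ℝ) (fun j => ‖p i - p j‖ ^ 2) b) a) :
    ((1 / (Nat.factorial k : ℝ)) * |D.det|) ^ 2 =
      ((-1 : ℝ) ^ (k + 1) / (2 ^ k * (Nat.factorial k : ℝ) ^ 2)) * CM.det := by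
  rw [show CM = cayleyMengerMatrix p from hCM, det_cayleyMengerMatrix, ← hD, mul_pow, sq_abs]
  have hsign : ((-1 : ℝ) ^ (k + 1)) ^ 2 = 1 := by simp [← pow_mul]
  field_simp
  rw [hsign, mul_one]
end
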